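/- arXiv:2405.18199 — 6 statements merged into one kernel-verified Lean document; each statement's English description precedes it below -/
import Mathlib

section
/- Let α be an exponential random variable with rate λ > 0, and let F : ℝ^d → ℝ be differentiable and satisfy the fundamental theorem of calculus along line segments (F(y) − F(x) = ∫₀¹ ⟨∇F(x + t(y−x)), y−x⟩ dt for all x, y). Then for any x, z ∈ ℝ^d, E[F(x + α z) − F(x)] = E[⟨∇F(x + α z), z⟩] / λ. -/
/-!
Along the ray, `F (x + a • z) - F x = ∫ s in 0..a, h s` with `h s = ⟪∇ F (x + s • z), z⟫`.
Exchanging the two integrals turns `E[∫ s in 0..α, h s]` into `∫ s in Ioi 0, P(α > s) * h s`, and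
for the exponential law the tail `P(α > s) = exp (-(l * s))` is the density divided by `l`, so this
is `E[h α] / l`.
-/

open MeasureTheory ProbabilityTheory Real Set
open scoped Gradient RealInnerProductSpace

theorem integral_intervalIntegral_eq_integral_measureReal_Ioi_mul {μ : Measure ℝ}
    [IsFiniteMeasure μ] (hμ : ∀ᵐ a ∂μ, 0 ≤ a) {g : ℝ → ℝ}
    (hg : AEStronglyMeasurable g (volume.restrict (Ioi 0)))
    (hgμ : IntegrableOn (fun s => μ.real (Ioi s) * g s) (Ioi 0)) :
    ∫ a, (∫ s in 0..a, g s) ∂μ = ∫ s in Ioi 0, μ.real (Ioi s) * g s := by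
  set K : ℝ → ℝ → ℝ := fun a s => {p : ℝ × ℝ | p.2 < p.1}.indicator (fun p => g p.2) (a, s)
  have K_fst (a s : ℝ) : K a s = (Iio a).indicator g s := by
    simp [K, indicator_apply]
  have K_snd (a s : ℝ) : K a s = (Ioi s).indicator (fun _ => g s) a := by
    simp [K, indicator_apply]
  have hK : Integrable (Function.uncurry K) (μ.prod (volume.restrict (Ioi 0))) := by
    have hKm : AEStronglyMeasurable (Function.uncurry K) (μ.prod (volume.restrict (Ioi 0))) :=
      hg.comp_snd.indicator (measurableSet_lt measurable_snd measurable_fst)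
    refine (integrable_prod_iff' hKm).2 ⟨.of_forall fun s => ?_, ?_⟩
    · simp_rw [Function.uncurry_apply_pair, K_snd]
      exact (integrable_const _).indicator measurableSet_Ioi
    · refine hgμ.norm.congr (.of_forall fun s => ?_)
      simp_rw [Function.uncurry_apply_pair, K_snd, norm_indicator_eq_indicator_norm,
        integral_indicator_const _ measurableSet_Ioi, smul_eq_mul, norm_mul,
        Real.norm_of_nonneg measureReal_nonneg]
  calc ∫ a, (∫ s in 0..a, g s) ∂μ = ∫ a, (∫ s in Ioi 0, K a s) ∂μ := by
        refine integral_congr_ae (hμ.mono fun a ha => ?_)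
        dsimp only
        simp_rw [K_fst]
        rw [integral_indicator measurableSet_Iio, Measure.restrict_restrict measurableSet_Iio,
          Iio_inter_Ioi, intervalIntegral.integral_of_le ha, integral_Ioc_eq_integral_Ioo]
    _ = ∫ s in Ioi 0, ∫ a, K a s ∂μ := integral_integral_swap hK
    _ = ∫ s in Ioi 0, μ.real (Ioi s) * g s := by
        simp_rw [K_snd, integral_indicator_const _ measurableSet_Ioi, smul_eq_mul]

section ExponentialDistribution

variable {l : ℝ}

theorem expMeasure_eq_withDensity :
    expMeasure l =
      (volume.restrict (Ioi 0)).withDensity fun s => ENNReal.ofReal (l * exp (-(l * s))) := by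
  have pdf_eq :
      exponentialPDF l = (Ici 0).indicator fun s => ENNReal.ofReal (l * exp (-(l * s))) := by
    ext s
    by_cases hs : 0 ≤ s <;> simp [exponentialPDF_eq, hs]
  calc expMeasure l = volume.withDensity (exponentialPDF l) := rfl
    _ = _ := by
      rw [pdf_eq, withDensity_indicator measurableSet_Ici, Measure.restrict_congr_set Ioi_ae_eq_Ici]

theorem ae_expMeasure_pos : ∀ᵐ a ∂expMeasure l, 0 < a := by
  rw [expMeasure_eq_withDensity]
  exact (withDensity_absolutelyContinuous _ _).ae_le (ae_restrict_mem measurableSet_Ioi)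

variable {E : Type*} [NormedAddCommGroup E] [NormedSpace ℝ E]

theorem integral_expMeasure (hl : 0 ≤ l) (f : ℝ → E) :
    ∫ a, f a ∂expMeasure l = ∫ s in Ioi 0, (l * exp (-(l * s))) • f s := by
  rw [expMeasure_eq_withDensity, integral_withDensity_eq_integral_toReal_smul (by fun_prop)
    (.of_forall fun _ => ENNReal.ofReal_lt_top)]
  simp_rw [ENNReal.toReal_ofReal (by positivity : 0 ≤ l * exp _)]

theorem integrable_expMeasure_iff (hl : 0 ≤ l) {f : ℝ → E} :
    Integrable f (expMeasure l) ↔ IntegrableOn (fun s => (l * exp (-(l * s))) • f s) (Ioi 0) := by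
  rw [expMeasure_eq_withDensity, integrable_withDensity_iff_integrable_smul' (by fun_prop)
    (.of_forall fun _ => ENNReal.ofReal_lt_top)]
  simp_rw [ENNReal.toReal_ofReal (by positivity : 0 ≤ l * exp _)]
  rfl

theorem expMeasure_real_Ioi (hl : 0 < l) {s : ℝ} (hs : 0 ≤ s) :
    (expMeasure l).real (Ioi s) = exp (-(l * s)) := by
  have := isProbabilityMeasure_expMeasure hl
  rw [← compl_Iic, measureReal_compl measurableSet_Iic, probReal_univ, ← cdf_eq_real,
    cdf_expMeasure_eq hl, if_pos hs, sub_sub_cancel]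

end ExponentialDistribution

theorem integral_intervalIntegral_expMeasure {l : ℝ} (hl : 0 < l) {g : ℝ → ℝ}
    (hg : Integrable g (expMeasure l)) :
    ∫ a, (∫ s in 0..a, g s) ∂expMeasure l = (∫ a, g a ∂expMeasure l) / l := by
  have := isProbabilityMeasure_expMeasure hl
  set p : ℝ → ℝ := fun s => l * exp (-(l * s))
  have hp : Continuous p := by fun_prop
  have hp_pos (s : ℝ) : 0 < p s := mul_pos hl (exp_pos _)
  have hpg : IntegrableOn (fun s => p s * g s) (Ioi 0) := (integrable_expMeasure_iff hl.le).1 hg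
  have hg_meas : AEStronglyMeasurable g (volume.restrict (Ioi 0)) := by
    exact (hp.inv₀ fun s => (hp_pos s).ne').aestronglyMeasurable.mul hpg.aestronglyMeasurable
      |>.congr (.of_forall fun s => inv_mul_cancel_left₀ (hp_pos s).ne' (g s))
  have tail : EqOn (fun s => (expMeasure l).real (Ioi s) * g s) (fun s => l⁻¹ * (p s * g s))
      (Ioi 0) := fun s hs => by
    simp only [p, expMeasure_real_Ioi hl (le_of_lt hs)]
    field_simp
  rw [integral_intervalIntegral_eq_integral_measureReal_Ioi_mul
      (ae_expMeasure_pos.mono fun _ => le_of_lt) hg_meas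
      (IntegrableOn.congr_fun (hpg.const_mul l⁻¹) tail.symm measurableSet_Ioi),
    setIntegral_congr_fun measurableSet_Ioi tail, integral_const_mul, integral_expMeasure hl.le,
    inv_mul_eq_div]
  simp only [p, smul_eq_mul]

theorem sub_eq_intervalIntegral_inner_of_forall_sub_eq {E : Type*} [NormedAddCommGroup E]
    [InnerProductSpace ℝ E] {F : E → ℝ} {G : E → E}
    (hFTC : ∀ x y, F y - F x = ∫ t in (0:ℝ)..1, ⟪G (x + t • (y - x)), y - x⟫) (x z : E) (a : ℝ) :
    F (x + a • z) - F x = ∫ s in 0..a, ⟪G (x + s • z), z⟫ := by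
  simp_rw [hFTC x, add_sub_cancel_left, smul_smul, real_inner_smul_right,
    intervalIntegral.integral_const_mul, intervalIntegral.mul_integral_comp_mul_right
      (f := fun s => ⟪G (x + s • z), z⟫), zero_mul, one_mul]

theorem exp_random_linearization_general {d : ℕ} (F : EuclideanSpace ℝ (Fin d) → ℝ) (l : ℝ) (hl : 0 < l)
    (hFTC : ∀ x y : EuclideanSpace ℝ (Fin d),
      F y - F x = ∫ t in (0:ℝ)..1, ⟪∇ F (x + t • (y - x)), y - x⟫)
    (x z : EuclideanSpace ℝ (Fin d))
    (hInt2 : Integrable (fun a : ℝ => (⟪∇ F (x + a • z), z⟫ : ℝ)) (expMeasure l)) :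
    ∫ a : ℝ, (F (x + a • z) - F x) ∂(expMeasure l)
      = (∫ a : ℝ, (⟪∇ F (x + a • z), z⟫ : ℝ) ∂(expMeasure l)) / l := by
  simp_rw [sub_eq_intervalIntegral_inner_of_forall_sub_eq hFTC x z]
  exact integral_intervalIntegral_expMeasure hl hInt2

/-- For `α ~ Exp(l)` with rate `l > 0`, and `F` differentiable satisfying the
fundamental theorem of calculus along segments, `E[F(x + α z) − F(x)] = E[⟨∇F(x + α z), z⟩] / l`. -/
theorem exp_random_linearization {d : ℕ} (F : EuclideanSpace ℝ (Fin d) → ℝ) (l : ℝ) (hl : 0 < l)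
    (hF : Differentiable ℝ F)
    (hFTC : ∀ x y : EuclideanSpace ℝ (Fin d),
      F y - F x = ∫ t in (0:ℝ)..1, ⟪∇ F (x + t • (y - x)), y - x⟫)
    (x z : EuclideanSpace ℝ (Fin d))
    (hInt1 : Integrable (fun a : ℝ => F (x + a • z) - F x) (expMeasure l))
    (hInt2 : Integrable (fun a : ℝ => (⟪∇ F (x + a • z), z⟫ : ℝ)) (expMeasure l)) :
    ∫ a : ℝ, (F (x + a • z) - F x) ∂(expMeasure l)
      = (∫ a : ℝ, (⟪∇ F (x + a • z), z⟫ : ℝ) ∂(expMeasure l)) / l :=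
  exp_random_linearization_general F l hl hFTC x z hInt2
end

section
/- If F : ℝ^d → ℝ is differentiable with L-Lipschitz gradient (L-smooth), and x is a (λ, ε)-stationary point of F with λ = L²/ε, then ‖∇F(x)‖ ≤ 2ε. -/
open MeasureTheory
open scoped Gradient

/-- `x` is a `(lam, eps)`-stationary point of `F`: there is a probability distribution `p`
with mean `x` such that `‖E_{y∼p}[∇F(y)]‖ + lam · E_{y∼p}‖y − x‖² ≤ eps`. -/
def IsStationaryPoint {d : ℕ} (F : EuclideanSpace ℝ (Fin d) → ℝ) (lam eps : ℝ)
    (x : EuclideanSpace ℝ (Fin d)) : Prop :=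
  ∃ p : Measure (EuclideanSpace ℝ (Fin d)), IsProbabilityMeasure p ∧
    Integrable (fun y => y) p ∧ Integrable (fun y => ∇ F y) p ∧
    Integrable (fun y => ‖y - x‖ ^ 2) p ∧
    (∫ y, y ∂p) = x ∧
    ‖∫ y, ∇ F y ∂p‖ + lam * ∫ y, ‖y - x‖ ^ 2 ∂p ≤ eps

/-- If `F` is `L`-smooth and `x` is an `(L²/ε, ε)`-stationary point,
then `‖∇F(x)‖ ≤ 2ε`. -/
theorem norm_grad_le_of_stationary_smooth {d : ℕ} (F : EuclideanSpace ℝ (Fin d) → ℝ)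
    (L ε : ℝ) (hL : 0 < L) (hε : 0 < ε)
    (hF : Differentiable ℝ F)
    (hsmooth : ∀ x y : EuclideanSpace ℝ (Fin d), ‖∇ F x - ∇ F y‖ ≤ L * ‖x - y‖)
    (x : EuclideanSpace ℝ (Fin d))
    (hx : IsStationaryPoint F (L ^ 2 / ε) ε x) :
    ‖∇ F x‖ ≤ 2 * ε := by
  obtain ⟨p, hp, hy, hg, hsq, hmean, hineq⟩ := hx
  set a := ‖∫ y, ∇ F y ∂p‖ with ha
  set b := ∫ y, ‖y - x‖ ^ 2 ∂p with hb
  have hb0 : 0 ≤ b := integral_nonneg fun y => by positivity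
  -- pointwise bound
  have hpt : ∀ y, ‖∇ F x - ∇ F y‖ ≤ ε / 2 + (L ^ 2 / (2 * ε)) * ‖y - x‖ ^ 2 := by
    intro y
    have h1 : ‖∇ F x - ∇ F y‖ ≤ L * ‖x - y‖ := hsmooth x y
    have h2 : ‖x - y‖ = ‖y - x‖ := norm_sub_rev x y
    have h3 : L * ‖y - x‖ ≤ ε / 2 + (L ^ 2 / (2 * ε)) * ‖y - x‖ ^ 2 := by
      have h4 : L * ‖y - x‖ - ε / 2 ≤ L ^ 2 / (2 * ε) * ‖y - x‖ ^ 2 := by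
        rw [div_mul_eq_mul_div, le_div_iff₀ (by linarith)]
        nlinarith [sq_nonneg (ε - L * ‖y - x‖)]
      linarith
    linarith [h1, h2 ▸ h1]
  -- integrability
  have hgint : Integrable (fun y => ∇ F x - ∇ F y) p := (integrable_const (∇ F x)).sub hg
  have hnorm_int : Integrable (fun y => ‖∇ F x - ∇ F y‖) p := hgint.norm
  have hrhs_int : Integrable (fun y => ε / 2 + (L ^ 2 / (2 * ε)) * ‖y - x‖ ^ 2) p :=
    (integrable_const (ε / 2)).add (hsq.const_mul _)
  have key : ‖∇ F x - ∫ y, ∇ F y ∂p‖ ≤ ε / 2 + (L ^ 2 / (2 * ε)) * b := by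
    have e1 : ∇ F x - ∫ y, ∇ F y ∂p = ∫ y, (∇ F x - ∇ F y) ∂p := by
      rw [integral_sub (integrable_const (∇ F x)) hg, integral_const]
      simp
    rw [e1]
    calc ‖∫ y, (∇ F x - ∇ F y) ∂p‖ ≤ ∫ y, ‖∇ F x - ∇ F y‖ ∂p :=
          norm_integral_le_integral_norm _
      _ ≤ ∫ y, (ε / 2 + (L ^ 2 / (2 * ε)) * ‖y - x‖ ^ 2) ∂p :=
          integral_mono hnorm_int hrhs_int fun y => hpt y
      _ = ε / 2 + (L ^ 2 / (2 * ε)) * b := by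
          rw [integral_add (integrable_const _) (hsq.const_mul _), integral_const,
            integral_const_mul]
          simp [hb]
  have tri : ‖∇ F x‖ ≤ a + ‖∇ F x - ∫ y, ∇ F y ∂p‖ := by
    have := norm_add_le (∫ y, ∇ F y ∂p) (∇ F x - ∫ y, ∇ F y ∂p)
    simpa [ha] using this
  have hhalf : L ^ 2 / (2 * ε) * b ≤ L ^ 2 / ε * b := by
    apply mul_le_mul_of_nonneg_right _ hb0
    apply div_le_div_of_nonneg_left (by positivity) hε (by linarith)
  linarith
end

section
/- If F : ℝ^d → ℝ is twice differentiable with H-Lipschitz Hessian (H-second-order-smooth), and x is a (H/2, ε)-stationary point of F, then ‖∇F(x)‖ ≤ 2ε. -/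
open MeasureTheory
open scoped Gradient

/-!
Write `∇F(y) = ∇F(x) + ∇²F(x)(y - x) + r(y)`. Since the Hessian is `H`-Lipschitz, the mean value
inequality gives `‖r(y)‖ ≤ H‖y - x‖²`. Averaging over a distribution `p` with mean `x` kills the
linear term, so `‖∇F(x)‖ ≤ ‖𝔼∇F(y)‖ + H 𝔼‖y - x‖²`, which is at most twice the left-hand side of
the `(H/2, ε)`-stationarity inequality.
-/

section Taylor

variable {E G : Type*} [NormedAddCommGroup E] [NormedSpace ℝ E]
  [NormedAddCommGroup G] [NormedSpace ℝ G]

theorem norm_image_sub_sub_fderiv_le_mul_sq {f : E → G} {H : ℝ} (hH : 0 ≤ H)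
    (hf : Differentiable ℝ f)
    (hf' : ∀ x y, ‖fderiv ℝ f x - fderiv ℝ f y‖ ≤ H * ‖x - y‖) (x y : E) :
    ‖f y - f x - fderiv ℝ f x (y - x)‖ ≤ H * ‖y - x‖ ^ 2 := by
  have hbound : ∀ z ∈ segment ℝ x y, ‖fderiv ℝ f z - fderiv ℝ f x‖ ≤ H * ‖y - x‖ :=
    fun z hz => (hf' z x).trans (by gcongr; exact norm_sub_le_of_mem_segment hz)
  calc ‖f y - f x - fderiv ℝ f x (y - x)‖ ≤ H * ‖y - x‖ * ‖y - x‖ :=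
        (convex_segment x y).norm_image_sub_le_of_norm_fderiv_le' (fun z _ => hf z) hbound
          (left_mem_segment ℝ x y) (right_mem_segment ℝ x y)
    _ = H * ‖y - x‖ ^ 2 := by ring

end Taylor

section Hessian

open InnerProductSpace

variable {E : Type*} [NormedAddCommGroup E] [InnerProductSpace ℝ E] [CompleteSpace E]

noncomputable def hessianCLM (F : E → ℝ) (x : E) : E →L[ℝ] E :=
  (toDual ℝ E).symm.toContinuousLinearEquiv.toContinuousLinearMap ∘L fderiv ℝ (fderiv ℝ F) x

theorem norm_gradient_sub_sub_hessianCLM_le {F : E → ℝ} {H : ℝ} (hH : 0 ≤ H)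
    (hF : ContDiff ℝ 2 F)
    (hhess : ∀ x y, ‖fderiv ℝ (fderiv ℝ F) x - fderiv ℝ (fderiv ℝ F) y‖ ≤ H * ‖x - y‖)
    (x y : E) :
    ‖∇ F y - ∇ F x - hessianCLM F x (y - x)‖ ≤ H * ‖y - x‖ ^ 2 := by
  have hdiff : Differentiable ℝ (fderiv ℝ F) :=
    (hF.fderiv_right le_rfl).differentiable one_ne_zero
  have hrem : ∇ F y - ∇ F x - hessianCLM F x (y - x) = (toDual ℝ E).symm
      (fderiv ℝ F y - fderiv ℝ F x - fderiv ℝ (fderiv ℝ F) x (y - x)) := by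
    simp [gradient, hessianCLM, map_sub]
  rw [hrem, LinearIsometryEquiv.norm_map]
  exact norm_image_sub_sub_fderiv_le_mul_sq hH hdiff hhess x y

end Hessian

theorem norm_le_norm_integral_add_of_norm_sub_sub_le {E G : Type*}
    [NormedAddCommGroup E] [NormedSpace ℝ E] [CompleteSpace E] [MeasurableSpace E]
    [NormedAddCommGroup G] [NormedSpace ℝ G] [CompleteSpace G]
    {p : Measure E} [IsProbabilityMeasure p] {g : E → G} {A : E →L[ℝ] G} {x : E} {C : ℝ}
    (hid : Integrable (fun y => y) p) (hg : Integrable g p)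
    (hsq : Integrable (fun y => ‖y - x‖ ^ 2) p) (hmean : ∫ y, y ∂p = x)
    (hrem : ∀ y, ‖g y - g x - A (y - x)‖ ≤ C * ‖y - x‖ ^ 2) :
    ‖g x‖ ≤ ‖∫ y, g y ∂p‖ + C * ∫ y, ‖y - x‖ ^ 2 ∂p := by
  have hcentered : Integrable (fun y => y - x) p := hid.sub (integrable_const x)
  have hlin : Integrable (fun y => A (y - x)) p := A.integrable_comp hcentered
  have hlin_zero : ∫ y, A (y - x) ∂p = 0 := by
    rw [A.integral_comp_comm hcentered, integral_sub hid (integrable_const x), hmean,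
      integral_const, probReal_univ, one_smul, sub_self, map_zero]
  have hshift : Integrable (fun y => g y - g x) p := hg.sub (integrable_const _)
  have hrem_int : ∫ y, (g y - g x - A (y - x)) ∂p = ∫ y, g y ∂p - g x := by
    rw [integral_sub hshift hlin, integral_sub hg (integrable_const _),
      hlin_zero, integral_const, probReal_univ, one_smul, sub_zero]
  calc ‖g x‖ = ‖∫ y, g y ∂p - ∫ y, (g y - g x - A (y - x)) ∂p‖ := by rw [hrem_int, sub_sub_cancel]
    _ ≤ ‖∫ y, g y ∂p‖ + ‖∫ y, (g y - g x - A (y - x)) ∂p‖ := norm_sub_le _ _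
    _ ≤ ‖∫ y, g y ∂p‖ + C * ∫ y, ‖y - x‖ ^ 2 ∂p := by
      gcongr
      calc ‖∫ y, (g y - g x - A (y - x)) ∂p‖ ≤ ∫ y, C * ‖y - x‖ ^ 2 ∂p :=
            norm_integral_le_of_norm_le (hsq.const_mul C) (.of_forall hrem)
        _ = C * ∫ y, ‖y - x‖ ^ 2 ∂p := integral_const_mul C _

theorem norm_grad_le_of_stationary_secondOrderSmooth_general {d : ℕ}
    (F : EuclideanSpace ℝ (Fin d) → ℝ) (H ε : ℝ) (hH : 0 < H)
    (hF : ContDiff ℝ 2 F)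
    (hhess : ∀ x y : EuclideanSpace ℝ (Fin d),
      ‖fderiv ℝ (fderiv ℝ F) x - fderiv ℝ (fderiv ℝ F) y‖ ≤ H * ‖x - y‖)
    (x : EuclideanSpace ℝ (Fin d))
    (hx : IsStationaryPoint F (H / 2) ε x) :
    ‖∇ F x‖ ≤ 2 * ε := by
  obtain ⟨p, _, hid, hgrad, hsq, hmean, hstationary⟩ := hx
  have hgrad_le := norm_le_norm_integral_add_of_norm_sub_sub_le hid hgrad hsq hmean
    (norm_gradient_sub_sub_hessianCLM_le hH.le hF hhess x)
  have hvar_nonneg : 0 ≤ ∫ y, ‖y - x‖ ^ 2 ∂p := integral_nonneg fun y => sq_nonneg _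
  linarith [norm_nonneg (∫ y, ∇ F y ∂p)]

/-- If `F` is twice differentiable with `H`-Lipschitz Hessian and `x` is an
`(H/2, ε)`-stationary point, then `‖∇F(x)‖ ≤ 2ε`. -/
theorem norm_grad_le_of_stationary_secondOrderSmooth {d : ℕ}
    (F : EuclideanSpace ℝ (Fin d) → ℝ) (H ε : ℝ) (hH : 0 < H) (hε : 0 < ε)
    (hF : ContDiff ℝ 2 F)
    (hhess : ∀ x y : EuclideanSpace ℝ (Fin d),
      ‖fderiv ℝ (fderiv ℝ F) x - fderiv ℝ (fderiv ℝ F) y‖ ≤ H * ‖x - y‖)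
    (x : EuclideanSpace ℝ (Fin d))
    (hx : IsStationaryPoint F (H / 2) ε x) :
    ‖∇ F x‖ ≤ 2 * ε :=
  norm_grad_le_of_stationary_secondOrderSmooth_general F H ε hH hF hhess x hx
end

section
/- Suppose F : ℝ^d → ℝ is differentiable and G-Lipschitz. For any λ, ε, δ > 0, if x is a (λ, ε)-stationary point of F, then x is a (δ, ε′)-Goldstein stationary point with ε′ = (1 + 2G/(λδ²)) · ε. -/
open MeasureTheory
open scoped Gradient

/-- `x` is a `(δ, ε')`-Goldstein stationary point of `F`: there is a probability distribution `q`
supported on the closed ball of radius `δ` around `x` with `‖E_{y∼q}[∇F(y)]‖ ≤ ε'`. -/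
def IsGoldsteinStationaryPoint {d : ℕ} (F : EuclideanSpace ℝ (Fin d) → ℝ) (δ ε' : ℝ)
    (x : EuclideanSpace ℝ (Fin d)) : Prop :=
  ∃ q : Measure (EuclideanSpace ℝ (Fin d)), IsProbabilityMeasure q ∧
    q (Metric.closedBall x δ)ᶜ = 0 ∧
    Integrable (fun y => ∇ F y) q ∧
    ‖∫ y, ∇ F y ∂q‖ ≤ ε'

/-!
Let `p` witness `(λ, ε)`-stationarity and `B` be the closed `δ`-ball about `x`. Markov's
inequality gives `λδ² p(Bᶜ) ≤ λ E‖y - x‖² ≤ ε - ‖E ∇F‖`. If `λδ² ≤ 2ε`, the target bound is at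
least `G`, so the Dirac mass at `x` already works. Otherwise `p(Bᶜ) < 1/2`, and conditioning `p`
on `B` removes the mass `p(Bᶜ)`, which changes `E ∇F` by at most `G p(Bᶜ)`, then rescales by
`1 / (1 - p(Bᶜ)) ≤ 2`.
-/

open ProbabilityTheory

lemma mul_measureReal_compl_closedBall_le {E : Type*} [SeminormedAddCommGroup E]
    [MeasurableSpace E] (μ : Measure E) [IsFiniteMeasure μ] (x : E) {δ : ℝ} (hδ : 0 ≤ δ)
    (hint : Integrable (fun y => ‖y - x‖ ^ 2) μ) :
    δ ^ 2 * μ.real (Metric.closedBall x δ)ᶜ ≤ ∫ y, ‖y - x‖ ^ 2 ∂μ := by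
  have hsub : (Metric.closedBall x δ)ᶜ ⊆ {y | δ ^ 2 ≤ ‖y - x‖ ^ 2} := fun y hy => by
    have : δ < ‖y - x‖ := by simpa [dist_eq_norm] using hy
    simp only [Set.mem_ofPred_eq]
    gcongr
  calc δ ^ 2 * μ.real (Metric.closedBall x δ)ᶜ
      ≤ δ ^ 2 * μ.real {y | δ ^ 2 ≤ ‖y - x‖ ^ 2} := by
        gcongr
        exact measure_ne_top μ _
    _ ≤ ∫ y, ‖y - x‖ ^ 2 ∂μ :=
      mul_meas_ge_le_integral_of_nonneg (Filter.Eventually.of_forall fun _ => by positivity)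
        hint _

lemma norm_integral_cond_mul_le {α E : Type*} [MeasurableSpace α] [NormedAddCommGroup E]
    [NormedSpace ℝ E] {μ : Measure α} [IsFiniteMeasure μ] {s : Set α} (hs : MeasurableSet s)
    {f : α → E} (hf : Integrable f μ) {C : ℝ} (hC : ∀ᵐ x ∂μ, ‖f x‖ ≤ C) :
    ‖∫ x, f x ∂μ[|s]‖ * μ.real s ≤ ‖∫ x, f x ∂μ‖ + C * μ.real sᶜ := by
  have hcond : ‖∫ x, f x ∂μ[|s]‖ * μ.real s = ‖∫ x in s, f x ∂μ‖ := by
    rcases eq_or_ne (μ s) 0 with h0 | h0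
    · simp [Measure.real, h0, Measure.restrict_eq_zero.2 h0]
    · have hpos : 0 < μ.real s := ENNReal.toReal_pos h0 (measure_ne_top μ s)
      rw [ProbabilityTheory.cond, integral_smul_measure, norm_smul, ENNReal.toReal_inv, norm_inv,
        Real.norm_of_nonneg ENNReal.toReal_nonneg]
      change (μ.real s)⁻¹ * _ * μ.real s = _
      field_simp
  calc ‖∫ x, f x ∂μ[|s]‖ * μ.real s = ‖∫ x in s, f x ∂μ‖ := hcond
    _ ≤ ‖∫ x, f x ∂μ‖ + ‖∫ x, f x ∂μ - ∫ x in s, f x ∂μ‖ := norm_le_norm_add_norm_sub _ _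
    _ ≤ ‖∫ x, f x ∂μ‖ + C * μ.real sᶜ := by
      rw [mul_comm C]
      gcongr
      exact norm_integral_sub_setIntegral_le hC hs hf

lemma add_mul_le_one_add_div_mul_mul_one_sub {e a G κ ε : ℝ} (he : 0 ≤ e) (ha : 0 ≤ a)
    (hG : 0 ≤ G) (hκ : 0 < κ) (hκε : 2 * ε < κ) (h : e + κ * a ≤ ε) :
    e + G * a ≤ (1 + 2 * G / κ) * ε * (1 - a) := by
  have ha' : 2 * a < 1 := by nlinarith
  have hε : 0 ≤ ε := by nlinarith
  have hGa : G * a ≤ 2 * G / κ * ε * (1 - a) := by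
    rw [div_mul_eq_mul_div, div_mul_eq_mul_div, le_div_iff₀ hκ]
    nlinarith [mul_le_mul_of_nonneg_left (h.trans' (le_add_of_nonneg_left he)) hG,
      mul_nonneg (mul_nonneg hG hε) (sub_nonneg.2 ha'.le)]
  have he' : e ≤ ε * (1 - a) := by
    nlinarith [mul_le_mul_of_nonneg_right (hκε.le.trans' (by linarith) : ε ≤ κ) ha]
  linarith

section Goldstein

variable {d : ℕ} {F : EuclideanSpace ℝ (Fin d) → ℝ} {δ ε' : ℝ} {x : EuclideanSpace ℝ (Fin d)}

lemma IsGoldsteinStationaryPoint.of_norm_gradient_le (hδ : 0 ≤ δ) (h : ‖∇ F x‖ ≤ ε') :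
    IsGoldsteinStationaryPoint F δ ε' x := by
  refine ⟨Measure.dirac x, inferInstance, ?_, integrable_dirac enorm_lt_top,
    by rwa [integral_dirac]⟩
  rw [Measure.dirac_apply' _ Metric.isClosed_closedBall.measurableSet.compl]
  simp [Metric.mem_closedBall_self hδ]

lemma IsGoldsteinStationaryPoint.of_cond (p : Measure (EuclideanSpace ℝ (Fin d)))
    [IsFiniteMeasure p] (hp : p (Metric.closedBall x δ) ≠ 0) (hF : Integrable (∇ F) p)
    (h : ‖∫ y, ∇ F y ∂p[|Metric.closedBall x δ]‖ ≤ ε') :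
    IsGoldsteinStationaryPoint F δ ε' x :=
  ⟨_, cond_isProbabilityMeasure hp, ae_iff.1 (ae_cond_mem measurableSet_closedBall),
    hF.integrableOn.smul_measure (ENNReal.inv_ne_top.2 hp), h⟩

end Goldstein

theorem goldstein_of_stationary_general {d : ℕ} (F : EuclideanSpace ℝ (Fin d) → ℝ)
    (G lam ε δ : ℝ) (hlam : 0 < lam) (hδ : 0 < δ)
    (hLip : ∀ y : EuclideanSpace ℝ (Fin d), ‖∇ F y‖ ≤ G)
    (x : EuclideanSpace ℝ (Fin d))
    (hx : IsStationaryPoint F lam ε x) :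
    IsGoldsteinStationaryPoint F δ ((1 + 2 * G / (lam * δ ^ 2)) * ε) x := by
  obtain ⟨p, hp, -, hint, hsq, -, hpx⟩ := hx
  have hG : 0 ≤ G := (norm_nonneg _).trans (hLip x)
  have hκ : 0 < lam * δ ^ 2 := by positivity
  rcases le_or_gt (lam * δ ^ 2) (2 * ε) with hκε | hκε
  · refine .of_norm_gradient_le hδ.le ((hLip x).trans ?_)
    have hG_le : G ≤ 2 * G / (lam * δ ^ 2) * ε := by
      rw [div_mul_eq_mul_div, le_div_iff₀ hκ]
      nlinarith
    linarith
  · have hB : MeasurableSet (Metric.closedBall x δ) := measurableSet_closedBall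
    set a := p.real (Metric.closedBall x δ)ᶜ with ha_def
    have hmarkov := mul_measureReal_compl_closedBall_le p x hδ.le hsq
    have hmass : ‖∫ y, ∇ F y ∂p‖ + lam * δ ^ 2 * a ≤ ε := by
      linarith [mul_le_mul_of_nonneg_left hmarkov hlam.le]
    have ha : 2 * a < 1 := by nlinarith [norm_nonneg (∫ y, ∇ F y ∂p)]
    have hBa : p.real (Metric.closedBall x δ) = 1 - a := by
      rw [ha_def, probReal_compl_eq_one_sub hB]
      ring
    have hBpos : 0 < 1 - a := by linarith
    refine .of_cond p ((measureReal_ne_zero_iff (measure_ne_top _ _)).1 (hBa ▸ hBpos.ne')) hint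
      (le_of_mul_le_mul_right ?_ hBpos)
    calc _ ≤ ‖∫ y, ∇ F y ∂p‖ + G * a := hBa ▸ norm_integral_cond_mul_le hB hint (ae_of_all _ hLip)
      _ ≤ _ := add_mul_le_one_add_div_mul_mul_one_sub (norm_nonneg _) measureReal_nonneg hG hκ
        hκε hmass

/-- If `F` is `G`-Lipschitz and `x` is a `(λ, ε)`-stationary point, then `x`
is a `(δ, (1 + 2G/(λδ²))·ε)`-Goldstein stationary point. -/
theorem goldstein_of_stationary {d : ℕ} (F : EuclideanSpace ℝ (Fin d) → ℝ)
    (G lam ε δ : ℝ) (hlam : 0 < lam) (hε : 0 < ε) (hδ : 0 < δ)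
    (hF : Differentiable ℝ F)
    (hLip : ∀ y : EuclideanSpace ℝ (Fin d), ‖∇ F y‖ ≤ G)
    (x : EuclideanSpace ℝ (Fin d))
    (hx : IsStationaryPoint F lam ε x) :
    IsGoldsteinStationaryPoint F δ ((1 + 2 * G / (lam * δ ^ 2)) * ε) x :=
  goldstein_of_stationary_general F G lam ε δ hlam hδ hLip x hx
end

section
/- For the scale-free FTRL algorithm on the ball of radius D, which plays z_t = −clip_D(D · (Σ_{s=1}^{t−1} v_s) / sqrt(Σ_{s=1}^{t−1} ‖v_s‖²)) (and z_t = 0 if all previous v_s are zero), for any T > 0, any loss vectors v_1, …, v_T ∈ ℝ^d, and any comparator u with ‖u‖ ≤ D, the regret satisfies Σ_{t=1}^T ⟨v_t, z_t − u⟩ ≤ 4D · sqrt(Σ_{t=1}^T ‖v_t‖²). -/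
open scoped RealInnerProductSpace BigOperators

/-- The clipping operator `clip_D(x) = x · min(D/‖x‖, 1)`. -/
noncomputable def clipVec {d : ℕ} (D : ℝ) (x : EuclideanSpace ℝ (Fin d)) :
    EuclideanSpace ℝ (Fin d) :=
  (min (D / ‖x‖) 1) • x

private lemma le_of_sq_le' {x y : ℝ} (hx : 0 ≤ x) (hy : 0 ≤ y) (h : x ^ 2 ≤ y ^ 2) : x ≤ y := by
  nlinarith [sq_nonneg (x - y), sq_nonneg (x + y)]

noncomputable def phiSF (s W : ℝ) : ℝ := if s ≤ W then s ^ 2 / (2 * W) + W / 2 else s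

lemma phiSF_ge {s W : ℝ} (hs : 0 ≤ s) (hW : 0 ≤ W) : s ≤ phiSF s W := by
  unfold phiSF
  split_ifs with h
  · rcases eq_or_lt_of_le hW with hW0 | hW0
    · have : s = 0 := le_antisymm (h.trans_eq hW0.symm) hs
      simp [this, ← hW0]
    · have key : s ^ 2 / (2 * W) + W / 2 - s = (s - W) ^ 2 / (2 * W) := by
        field_simp; ring
      have := div_nonneg (sq_nonneg (s - W)) (by linarith : (0:ℝ) ≤ 2 * W)
      linarith [key ▸ this]
  · exact le_refl s

set_option maxHeartbeats 1000000 in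
lemma keySF (s W g a s' W' : ℝ) (hs : 0 ≤ s) (hW : 0 ≤ W) (hg : 0 ≤ g)
    (hs' : 0 ≤ s') (hW' : 0 ≤ W') (ha : |a| ≤ g * s)
    (hseq : s' ^ 2 = s ^ 2 + 2 * a + g ^ 2) (hWeq : W' ^ 2 = W ^ 2 + g ^ 2) :
    -(a / max s W) + phiSF s' W' ≤ phiSF s W + 4 * (W' - W) := by
  obtain ⟨haL, haU⟩ := abs_le.1 ha
  have hWW' : W ≤ W' := le_of_sq_le' hW hW' (by nlinarith)
  have hgW' : g ≤ W' := le_of_sq_le' hg hW' (by nlinarith)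
  have hW'le : W' ≤ W + g := le_of_sq_le' hW' (by linarith) (by nlinarith)
  have hs'le : s' ≤ s + g := le_of_sq_le' hs' (by linarith) (by nlinarith)
  have hs'ge2 : (s - g) ^ 2 ≤ s' ^ 2 := by nlinarith
  rcases le_or_gt s W with hsW | hsW
  · -- M = W
    rw [max_eq_right hsW]
    rcases le_or_gt s' W' with hsW' | hsW'
    · -- Case A
      rw [phiSF, if_pos hsW', phiSF, if_pos hsW]
      rcases eq_or_lt_of_le hW with hW0 | hW0
      · -- W = 0
        have hs0 : s = 0 := le_antisymm (hsW.trans_eq hW0.symm) hs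
        have ha0 : a = 0 := by
          have := abs_nonneg a
          have : |a| = 0 := le_antisymm (by simpa [hs0] using ha) (abs_nonneg a)
          exact abs_eq_zero.1 this
        have hW'g : W' = g := le_antisymm
          (le_of_sq_le' hW' hg (by nlinarith)) hgW'
        have hs'g : s' = g := le_antisymm
          (le_of_sq_le' hs' hg (by nlinarith)) (le_of_sq_le' hg hs' (by nlinarith))
        rw [hs0, ha0, hW'g, hs'g, ← hW0]
        have e1 : g ^ 2 / (2 * g) ≤ g := by
          rcases eq_or_lt_of_le hg with h | h
          · rw [← h]; norm_num
          · rw [div_le_iff₀ (by positivity)]; nlinarith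
        have e2 : -(0 / (0:ℝ)) = 0 := by norm_num
        have e3 : (0:ℝ) ^ 2 / (2 * 0) = 0 := by norm_num
        rw [e2, e3]
        linarith
      · -- W > 0
        have hW'0 : (0:ℝ) < W' := lt_of_lt_of_le hW0 hWW'
        have hcore : 0 ≤ s ^ 2 + 2 * a + 6 * W * W' - W ^ 2 := by
          nlinarith [mul_nonneg hg (sub_nonneg.2 hsW), mul_nonneg hW' (by linarith : (0:ℝ) ≤ W + g - W'),
            mul_nonneg hg (by linarith : (0:ℝ) ≤ W + g - W'), mul_nonneg hW (sub_nonneg.2 hgW'),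
            sq_nonneg s]
        have hN : 0 ≤ (W' - W) * (s ^ 2 + 2 * a + 6 * W * W' - W ^ 2) :=
          mul_nonneg (by linarith) hcore
        have hg2 : g ^ 2 = W' ^ 2 - W ^ 2 := by linarith
        have hiden : (s ^ 2 / (2 * W) + W / 2 + 4 * (W' - W)) - (-(a / W) + (s' ^ 2 / (2 * W') + W' / 2))
            = ((W' - W) * (s ^ 2 + 2 * a + 6 * W * W' - W ^ 2)) / (2 * W * W') := by
          rw [hseq, hg2]
          field_simp
          ring
        have := div_nonneg hN (by positivity : (0:ℝ) ≤ 2 * W * W')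
        linarith [hiden ▸ this]
    · -- Case B
      rw [phiSF, if_neg (not_le.2 hsW'), phiSF, if_pos hsW]
      have hW0 : (0:ℝ) < W := by
        rcases eq_or_lt_of_le hW with h0 | h0
        · exfalso
          have hs0 : s = 0 := le_antisymm (hsW.trans_eq h0.symm) hs
          have ha0 : a = 0 := abs_eq_zero.1 (le_antisymm (by simpa [hs0] using ha) (abs_nonneg a))
          have : s' ^ 2 = W' ^ 2 := by rw [hseq, hWeq, hs0, ha0, ← h0]; ring
          have : s' = W' := le_antisymm (le_of_sq_le' hs' hW' this.le) (le_of_sq_le' hW' hs' this.ge)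
          exact absurd this.le (not_le.2 hsW')
        · exact h0
      have ha2 : a = (s' ^ 2 - s ^ 2 - g ^ 2) / 2 := by linarith
      have hg2 : g ^ 2 = W' ^ 2 - W ^ 2 := by linarith
      have hN : 0 ≤ (s' - W) ^ 2 + (W' - W) * (7 * W - W') := by
        nlinarith [mul_nonneg (by linarith : (0:ℝ) ≤ s' - W') (by linarith : (0:ℝ) ≤ s' + W' - 2 * W),
          mul_nonneg (mul_nonneg (by norm_num : (0:ℝ) ≤ 6) hW) (sub_nonneg.2 hWW')]
      have hiden : (s ^ 2 / (2 * W) + W / 2 + 4 * (W' - W)) - (-(a / W) + s')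
          = ((s' - W) ^ 2 + (W' - W) * (7 * W - W')) / (2 * W) := by
        rw [ha2, hg2]
        field_simp
        ring
      have := div_nonneg hN (by positivity : (0:ℝ) ≤ 2 * W)
      linarith [hiden ▸ this]
  · -- M = s
    rw [max_eq_left hsW.le]
    have hs0 : (0:ℝ) < s := lt_of_le_of_lt hW hsW
    rcases le_or_gt s' W' with hsW' | hsW'
    · -- Case C
      rw [phiSF, if_pos hsW', phiSF, if_neg (not_le.2 hsW)]
      have hW'0 : (0:ℝ) < W' := by
        rcases eq_or_lt_of_le hW' with h0 | h0
        · exfalso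
          have hg0 : g = 0 := le_antisymm (hgW'.trans_eq h0.symm) hg
          have ha0 : a = 0 := abs_eq_zero.1 (le_antisymm (by simpa [hg0] using ha) (abs_nonneg a))
          have hss : s' ^ 2 = s ^ 2 := by rw [hseq, ha0, hg0]; ring
          have : s' = s := le_antisymm (le_of_sq_le' hs' hs hss.le) (le_of_sq_le' hs hs' hss.ge)
          nlinarith [hsW'.trans_eq h0.symm]
        · exact h0
      have ha2 : a = (s' ^ 2 - s ^ 2 - g ^ 2) / 2 := by linarith
      have hN : 0 ≤ s' ^ 2 * (W' - s) + s ^ 2 * W' - W' * g ^ 2 + 7 * s * W' ^ 2 - 8 * s * W * W' := by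
        rcases le_or_gt W' s with hC1 | hC2
        · -- s ≥ W'
          have hss : (0:ℝ) ≤ W' ^ 2 - s' ^ 2 := by nlinarith
          have hA : (0:ℝ) ≤ (s - W') * (W' ^ 2 - s' ^ 2) := mul_nonneg (by linarith) hss
          have hBin : (0:ℝ) ≤ (s - W) ^ 2 + 6 * s * (W' - W) := by
            have := mul_nonneg hs0.le (sub_nonneg.2 hWW')
            nlinarith [sq_nonneg (s - W)]
          have hB : (0:ℝ) ≤ W' * ((s - W) ^ 2 + 6 * s * (W' - W)) := mul_nonneg hW'0.le hBin
          have hCeq : W' * W' ^ 2 = W' * (W ^ 2 + g ^ 2) := by rw [hWeq]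
          nlinarith [hA, hB, hCeq]
        · -- s < W'
          have hq1 : (0:ℝ) ≤ (s - W) * (2 * W' + 2 * g - s - W) :=
            mul_nonneg (by linarith) (by linarith)
          have hq2 : (0:ℝ) ≤ (W' - W) * (6 * W' - 2 * g) :=
            mul_nonneg (by linarith) (by linarith)
          have hR : (0:ℝ) ≤ 7 * W' ^ 2 - 8 * W * W' + 2 * s * W' - 2 * g * W' - s ^ 2 + 2 * g * s - g ^ 2 := by
            nlinarith [hq1, hq2]
          have hQ : (0:ℝ) ≤ s * (7 * W' ^ 2 - 8 * W * W' + 2 * s * W' - 2 * g * W' - s ^ 2 + 2 * g * s - g ^ 2) :=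
            mul_nonneg hs0.le hR
          have hX : (0:ℝ) ≤ (s' ^ 2 - (s - g) ^ 2) * (W' - s) :=
            mul_nonneg (by linarith) (by linarith)
          nlinarith [hQ, hX]
      have hiden : (s + 4 * (W' - W)) - (-(a / s) + (s' ^ 2 / (2 * W') + W' / 2))
          = (s' ^ 2 * (W' - s) + s ^ 2 * W' - W' * g ^ 2 + 7 * s * W' ^ 2 - 8 * s * W * W') / (2 * s * W') := by
        rw [ha2]
        field_simp
        ring
      have := div_nonneg hN (by positivity : (0:ℝ) ≤ 2 * s * W')
      linarith [hiden ▸ this]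
    · -- Case D
      rw [phiSF, if_neg (not_le.2 hsW'), phiSF, if_neg (not_le.2 hsW)]
      have ha2 : a = (s' ^ 2 - s ^ 2 - g ^ 2) / 2 := by linarith
      have hN : 0 ≤ (s' - s) ^ 2 - g ^ 2 + 8 * s * (W' - W) := by
        rcases eq_or_lt_of_le hW' with h0 | h0
        · have hg0 : g = 0 := le_antisymm (hgW'.trans_eq h0.symm) hg
          have hW0 : W = 0 := le_antisymm (hWW'.trans_eq h0.symm) hW
          nlinarith [sq_nonneg (s' - s)]
        · have f1 : (0:ℝ) ≤ g + s - s' := by linarith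
          have f2 : (0:ℝ) ≤ g + s' - s := by nlinarith [hs'ge2, le_of_sq_le' hs' (by linarith : (0:ℝ) ≤ s + g) (by nlinarith)]
          have f6 : (0:ℝ) ≤ s' - g := by linarith
          have hT1 : (0:ℝ) ≤ (g + s - s') * (g + s' - s) * ((s - W) + (s' - W')) :=
            mul_nonneg (mul_nonneg f1 f2) (by linarith)
          have hT2 : (0:ℝ) ≤ (s' - g) * (6 * g ^ 2 + 2 * (s' - s) ^ 2) :=
            mul_nonneg f6 (by positivity)
          have hT3 : (0:ℝ) ≤ (g + s - s') * (6 * g ^ 2 + (s' - s) ^ 2 - (s' - s) * g) :=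
            mul_nonneg f1 (by nlinarith [sq_nonneg (2 * (s' - s) - g)])
          have hNW : 0 ≤ ((s' - s) ^ 2 - g ^ 2 + 8 * s * (W' - W)) * (W + W') := by
            nlinarith [hT1, hT2, hT3]
          nlinarith [hNW]
      have hiden : (s + 4 * (W' - W)) - (-(a / s) + s')
          = ((s' - s) ^ 2 - g ^ 2 + 8 * s * (W' - W)) / (2 * s) := by
        rw [ha2]
        field_simp
        ring
      have := div_nonneg hN (by positivity : (0:ℝ) ≤ 2 * s)
      linarith [hiden ▸ this]

private lemma min_scalar (D Wt s : ℝ) (hD : 0 < D) (hWt : 0 < Wt) (hs : 0 < s) :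
    min (D / (D / Wt * s)) 1 * (D / Wt) = D / max s Wt := by
  have h0 : D / (D / Wt * s) = Wt / s := by
    field_simp
  rw [h0]
  rcases le_total s Wt with h | h
  · rw [max_eq_right h, min_eq_right ((le_div_iff₀ hs).2 (by linarith))]
    ring
  · rw [max_eq_left h, min_eq_left ((div_le_one hs).2 h)]
    field_simp

private lemma clipVec_eq {d : ℕ} (D Wt : ℝ) (hD : 0 < D) (hWt : 0 < Wt)
    (x : EuclideanSpace ℝ (Fin d)) :
    clipVec D ((D / Wt) • x) = (D / max ‖x‖ Wt) • x := by
  by_cases hx : x = 0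
  · simp [clipVec, hx]
  · unfold clipVec
    rw [norm_smul, Real.norm_eq_abs, abs_of_pos (div_pos hD hWt), smul_smul,
      min_scalar D Wt ‖x‖ hD hWt (norm_pos_iff.2 hx)]

set_option maxHeartbeats 1000000 in
/-- Scale-free FTRL on the ball of radius `D`, playing
`z t = −clip_D(D · (Σ_{s<t} v s) / sqrt(Σ_{s<t} ‖v s‖²))` (and `z t = 0` when all previous
losses vanish), guarantees regret at most `4D·sqrt(Σ_{t<T} ‖v t‖²)` against any comparator
`u` with `‖u‖ ≤ D`. -/
theorem scaleFreeFTRL_regret {d : ℕ} (D : ℝ) (hD : 0 < D)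
    (v z : ℕ → EuclideanSpace ℝ (Fin d))
    (hz : ∀ t : ℕ,
      if (∑ s ∈ Finset.range t, ‖v s‖ ^ 2) = 0 then z t = 0
      else z t = -clipVec D
        ((D / Real.sqrt (∑ s ∈ Finset.range t, ‖v s‖ ^ 2)) • ∑ s ∈ Finset.range t, v s))
    (T : ℕ) (u : EuclideanSpace ℝ (Fin d)) (hu : ‖u‖ ≤ D) :
    ∑ t ∈ Finset.range T, ⟪v t, z t - u⟫ ≤
      4 * D * Real.sqrt (∑ t ∈ Finset.range T, ‖v t‖ ^ 2) := by
  have hVnn : ∀ t : ℕ, (0:ℝ) ≤ ∑ s ∈ Finset.range t, ‖v s‖ ^ 2 :=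
    fun t => Finset.sum_nonneg fun i _ => sq_nonneg _
  have hWnn : ∀ t : ℕ, (0:ℝ) ≤ Real.sqrt (∑ s ∈ Finset.range t, ‖v s‖ ^ 2) :=
    fun t => Real.sqrt_nonneg _
  have hWsq : ∀ t : ℕ, Real.sqrt (∑ s ∈ Finset.range t, ‖v s‖ ^ 2) ^ 2
      = ∑ s ∈ Finset.range t, ‖v s‖ ^ 2 := fun t => Real.sq_sqrt (hVnn t)
  have hzz : ∀ t : ℕ, z t = -((D / max ‖∑ s ∈ Finset.range t, v s‖
      (Real.sqrt (∑ s ∈ Finset.range t, ‖v s‖ ^ 2))) • ∑ s ∈ Finset.range t, v s) := by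
    intro t
    have h := hz t
    by_cases hV0 : (∑ s ∈ Finset.range t, ‖v s‖ ^ 2) = 0
    · rw [if_pos hV0] at h
      have hS0 : (∑ s ∈ Finset.range t, v s) = 0 := by
        refine Finset.sum_eq_zero fun i hi => ?_
        have h1 := (Finset.sum_eq_zero_iff_of_nonneg (fun i _ => sq_nonneg ‖v i‖)).1 hV0 i hi
        have h2 : ‖v i‖ = 0 := by nlinarith [norm_nonneg (v i)]
        exact norm_eq_zero.1 h2
      rw [h, hS0, smul_zero, neg_zero]
    · rw [if_neg hV0] at h
      have hVpos : 0 < ∑ s ∈ Finset.range t, ‖v s‖ ^ 2 := lt_of_le_of_ne (hVnn t) (Ne.symm hV0)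
      have hWpos : 0 < Real.sqrt (∑ s ∈ Finset.range t, ‖v s‖ ^ 2) := Real.sqrt_pos.2 hVpos
      rw [h, clipVec_eq D _ hD hWpos]
  have hinner : ∀ t : ℕ, ⟪v t, z t⟫ = D * (-(⟪v t, ∑ s ∈ Finset.range t, v s⟫ /
      max ‖∑ s ∈ Finset.range t, v s‖ (Real.sqrt (∑ s ∈ Finset.range t, ‖v s‖ ^ 2)))) := by
    intro t
    rw [hzz t, inner_neg_right, real_inner_smul_right]
    ring
  have main : ∀ n : ℕ, ∑ t ∈ Finset.range n, ⟪v t, z t⟫ ≤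
      D * (4 * Real.sqrt (∑ s ∈ Finset.range n, ‖v s‖ ^ 2)
        - phiSF ‖∑ s ∈ Finset.range n, v s‖ (Real.sqrt (∑ s ∈ Finset.range n, ‖v s‖ ^ 2))) := by
    intro n
    induction n with
    | zero =>
      simp [phiSF]
    | succ n ih =>
      rw [Finset.sum_range_succ]
      have hs'2 : ‖∑ s ∈ Finset.range (n+1), v s‖ ^ 2
          = ‖∑ s ∈ Finset.range n, v s‖ ^ 2 + 2 * ⟪v n, ∑ s ∈ Finset.range n, v s⟫ + ‖v n‖ ^ 2 := by
        rw [Finset.sum_range_succ, norm_add_sq_real, real_inner_comm]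
      have hW'2 : Real.sqrt (∑ s ∈ Finset.range (n+1), ‖v s‖ ^ 2) ^ 2
          = Real.sqrt (∑ s ∈ Finset.range n, ‖v s‖ ^ 2) ^ 2 + ‖v n‖ ^ 2 := by
        rw [hWsq, hWsq, Finset.sum_range_succ]
      have hab : |⟪v n, ∑ s ∈ Finset.range n, v s⟫| ≤ ‖v n‖ * ‖∑ s ∈ Finset.range n, v s‖ :=
        abs_real_inner_le_norm _ _
      have hkey := keySF ‖∑ s ∈ Finset.range n, v s‖ (Real.sqrt (∑ s ∈ Finset.range n, ‖v s‖ ^ 2))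
        ‖v n‖ ⟪v n, ∑ s ∈ Finset.range n, v s⟫ ‖∑ s ∈ Finset.range (n+1), v s‖
        (Real.sqrt (∑ s ∈ Finset.range (n+1), ‖v s‖ ^ 2))
        (norm_nonneg _) (hWnn n) (norm_nonneg _) (norm_nonneg _) (hWnn (n+1))
        hab hs'2 hW'2
      have hkey' := mul_le_mul_of_nonneg_left hkey (le_of_lt hD)
      rw [hinner n]
      nlinarith [hkey', ih]
  have hsum : ∑ t ∈ Finset.range T, ⟪v t, z t - u⟫
      = ∑ t ∈ Finset.range T, ⟪v t, z t⟫ - ⟪∑ s ∈ Finset.range T, v s, u⟫ := by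
    simp only [inner_sub_right]
    rw [Finset.sum_sub_distrib, sum_inner]
  rw [hsum]
  have h1 : -⟪∑ s ∈ Finset.range T, v s, u⟫ ≤ ‖∑ s ∈ Finset.range T, v s‖ * D := by
    have ha := abs_real_inner_le_norm (∑ s ∈ Finset.range T, v s) u
    have h2 : ‖∑ s ∈ Finset.range T, v s‖ * ‖u‖ ≤ ‖∑ s ∈ Finset.range T, v s‖ * D :=
      mul_le_mul_of_nonneg_left hu (norm_nonneg _)
    cases abs_le.1 ha with
    | intro hl hr => linarith
  have h2 := main T
  have h3 : ‖∑ s ∈ Finset.range T, v s‖ ≤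
      phiSF ‖∑ s ∈ Finset.range T, v s‖ (Real.sqrt (∑ s ∈ Finset.range T, ‖v s‖ ^ 2)) :=
    phiSF_ge (norm_nonneg _) (hWnn T)
  nlinarith [h1, h2, h3]
end

section
/- Let β ∈ (0,1) and suppose ‖z_t‖ ≤ D for all t = 1, …, T. Let y_t be distributed over {x_1, …, x_t} with P(y_t = x_s) = β^{t−s}(1−β)/(1−β^t), where x_t = x_{t−1} + α_t z_t with α_t i.i.d. Exp(1), and let x̄_t = E[y_t]. Then (1/T) Σ_{t=1}^T E‖y_t − x̄_t‖² ≤ 12 D²/(1−β)². -/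
/-!
Since `x t - x s = ∑_{s < i ≤ t} α i • z i`, the spread `‖x s - x t‖` is at most
`D ∑_{s < i ≤ t} |α i|`, whose second moment is `D² (k² + k)` with `k = t - s`, by
independence and the Exp(1) moments `E|α| = 1`, `E α² = 2`. The weighted variance about the EMA
is at most the weighted second moment about `x t`, so each `E‖y t - x̄ t‖²` is at most `D²` times
the mean of `k² + k` under the truncated geometric law `P(k) ∝ β^k`, `k < t`, and that mean is
at most `4 / (1 - β)²`.
-/

open MeasureTheory ProbabilityTheory
open scoped BigOperators

/-- The EMA iterate `x̄ t = ((1−β)/(1−β^t)) Σ_{s=1}^t β^{t−s} • x s`. -/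
noncomputable def emaIterate {d : ℕ} (β : ℝ) (x : ℕ → EuclideanSpace ℝ (Fin d)) (t : ℕ) :
    EuclideanSpace ℝ (Fin d) :=
  ((1 - β) / (1 - β ^ t)) • ∑ s ∈ Finset.Icc 1 t, β ^ (t - s) • x s

open Finset
open scoped Nat

theorem sum_mul_norm_sub_sum_smul_sq_le {E ι : Type*} [NormedAddCommGroup E]
    [InnerProductSpace ℝ E] (I : Finset ι) {w : ι → ℝ}
    (hw₁ : ∑ i ∈ I, w i = 1) (a : ι → E) (c : E) :
    ∑ i ∈ I, w i * ‖a i - ∑ j ∈ I, w j • a j‖ ^ 2 ≤ ∑ i ∈ I, w i * ‖a i - c‖ ^ 2 := by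
  set m := ∑ j ∈ I, w j • a j
  have hcentred : ∑ i ∈ I, w i • (a i - m) = 0 := by
    simp only [smul_sub, sum_sub_distrib, ← sum_smul, hw₁, one_smul, m, sub_self]
  have hcross : ∑ i ∈ I, w i * inner ℝ (a i - m) (m - c) = 0 := by
    simp only [← real_inner_smul_left, ← sum_inner, hcentred, inner_zero_left]
  have hsplit : ∑ i ∈ I, w i * ‖a i - c‖ ^ 2 =
      ∑ i ∈ I, w i * ‖a i - m‖ ^ 2 + ‖m - c‖ ^ 2 := by
    have h : ∀ i, ‖a i - c‖ ^ 2 = ‖a i - m‖ ^ 2 + 2 * inner ℝ (a i - m) (m - c) + ‖m - c‖ ^ 2 :=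
      fun i => by rw [← norm_add_sq_real, sub_add_sub_cancel]
    simp only [h, mul_add, sum_add_distrib, ← sum_mul, hw₁, one_mul, mul_left_comm _ (2 : ℝ),
      ← mul_sum, hcross, mul_zero, add_zero]
  rw [hsplit]
  exact le_add_of_nonneg_right (sq_nonneg _)

theorem sum_pow_mul_sq_add_le {β : ℝ} (hβ₀ : 0 ≤ β) (hβ₁ : β < 1) (t : ℕ) :
    (1 - β) ^ 2 * ∑ k ∈ range t, β ^ k * ((k : ℝ) ^ 2 + k) ≤ 4 * ∑ k ∈ range t, β ^ k := by
  have hβ : 0 < 1 - β := by linarith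
  -- `ψ k - β * ψ (k + 1) = 4 - (1 - β) ^ 2 * (k ^ 2 + k)`, so the sum telescopes.
  set ψ : ℝ → ℝ := fun y => (4 - 2 * β) / (1 - β) - (1 - β) * y ^ 2 - (1 + β) * y with hψ
  have htelescope : ∀ m : ℕ,
      4 * ∑ k ∈ range m, β ^ k - (1 - β) ^ 2 * ∑ k ∈ range m, β ^ k * ((k : ℝ) ^ 2 + k) =
        ψ 0 - β ^ m * ψ m := by
    intro m
    induction m with
    | zero => simp
    | succ m ih =>
      simp only [sum_range_succ, hψ] at ih ⊢
      push_cast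
      field_simp at ih ⊢
      linear_combination ih
  have hψ_le : ψ t ≤ ψ 0 := by
    simp only [hψ]; nlinarith [sq_nonneg (t : ℝ), (Nat.cast_nonneg t : (0 : ℝ) ≤ t)]
  have hψ₀ : 0 ≤ ψ 0 := by simpa [hψ] using div_nonneg (by linarith : (0 : ℝ) ≤ 4 - 2 * β) hβ.le
  have hβt : β ^ t ≤ 1 := pow_le_one₀ hβ₀ hβ₁.le
  have hψt : β ^ t * ψ t ≤ ψ 0 := by
    rcases le_total (ψ t) 0 with h | h
    · nlinarith [pow_nonneg hβ₀ t]
    · nlinarith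
  linarith [htelescope t]

theorem sum_Icc_one_tsub {M : Type*} [AddCommMonoid M] (f : ℕ → M) (t : ℕ) :
    ∑ s ∈ Icc 1 t, f (t - s) = ∑ k ∈ range t, f k := by
  rw [← Ico_add_one_right_eq_Icc, sum_Ico_reflect _ _ le_rfl]
  simp

-- `emaWeight β t s = P(y t = x s)`.
noncomputable def emaWeight (β : ℝ) (t s : ℕ) : ℝ := β ^ (t - s) * (1 - β) / (1 - β ^ t)

section emaWeight

variable {β : ℝ} {t : ℕ}

theorem emaWeight_eq_div_geom_sum (hβ : β ≠ 1) (s : ℕ) :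
    emaWeight β t s = β ^ (t - s) / ∑ k ∈ range t, β ^ k := by
  rw [emaWeight, ← geom_sum_mul_neg, mul_div_mul_right _ _ (sub_ne_zero.2 hβ.symm)]

theorem emaWeight_nonneg (hβ₀ : 0 ≤ β) (hβ₁ : β ≠ 1) (s : ℕ) : 0 ≤ emaWeight β t s := by
  rw [emaWeight_eq_div_geom_sum hβ₁]
  positivity

theorem sum_emaWeight_mul (hβ : β ≠ 1) (g : ℕ → ℝ) :
    ∑ s ∈ Icc 1 t, emaWeight β t s * g (t - s) =
      (∑ k ∈ range t, β ^ k * g k) / ∑ k ∈ range t, β ^ k := by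
  simp only [emaWeight_eq_div_geom_sum hβ, div_mul_eq_mul_div, ← sum_div,
    sum_Icc_one_tsub (fun k => β ^ k * g k)]

theorem sum_emaWeight (hβ₀ : 0 ≤ β) (ht : t ≠ 0) (hβ₁ : β ≠ 1) :
    ∑ s ∈ Icc 1 t, emaWeight β t s = 1 := by
  simpa [div_self (geom_sum_pos hβ₀ ht).ne'] using sum_emaWeight_mul hβ₁ (t := t) (fun _ => 1)

theorem emaIterate_eq_sum_emaWeight_smul {d : ℕ} (x : ℕ → EuclideanSpace ℝ (Fin d)) :
    emaIterate β x t = ∑ s ∈ Icc 1 t, emaWeight β t s • x s := by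
  simp only [emaIterate, smul_sum, smul_smul, emaWeight]
  congr! 2
  ring

theorem sum_emaWeight_mul_sq_add_le (hβ₀ : 0 ≤ β) (hβ₁ : β < 1) (ht : t ≠ 0) :
    ∑ s ∈ Icc 1 t, emaWeight β t s * (((t - s : ℕ) : ℝ) ^ 2 + (t - s : ℕ)) ≤
      4 / (1 - β) ^ 2 := by
  rw [sum_emaWeight_mul hβ₁.ne fun k => (k : ℝ) ^ 2 + k,
    div_le_div_iff₀ (geom_sum_pos hβ₀ ht) (pow_pos (sub_pos.2 hβ₁) 2)]
  linarith [sum_pow_mul_sq_add_le hβ₀ hβ₁ t]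

end emaWeight

-- `emaVariance β x t = E[‖y t - x̄ t‖² | x]`.
noncomputable def emaVariance {d : ℕ} (β : ℝ) (x : ℕ → EuclideanSpace ℝ (Fin d)) (t : ℕ) : ℝ :=
  ∑ s ∈ Icc 1 t, emaWeight β t s * ‖x s - emaIterate β x t‖ ^ 2

theorem exponentialPDFReal_one_mul_abs_pow (n : ℕ) :
    (fun x => exponentialPDFReal 1 x * |x| ^ n) =
      Set.indicator (Set.Ici 0) (fun x => Real.exp (-x) * x ^ n) := by
  ext x
  by_cases hx : 0 ≤ x
  · simp [exponentialPDFReal, gammaPDFReal, hx, abs_of_nonneg hx]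
  · simp [exponentialPDFReal, gammaPDFReal, hx]

theorem integrableOn_exp_neg_mul_pow (n : ℕ) :
    IntegrableOn (fun x => Real.exp (-x) * x ^ n) (Set.Ici 0) := by
  rw [integrableOn_Ici_iff_integrableOn_Ioi]
  refine (Real.GammaIntegral_convergent (s := n + 1) (by positivity)).congr_fun
    (fun x _ => ?_) measurableSet_Ioi
  norm_num [Real.rpow_natCast]

theorem expMeasure_one_eq_withDensity :
    expMeasure 1 = volume.withDensity fun x => ENNReal.ofReal (exponentialPDFReal 1 x) := rfl

theorem integrable_abs_pow_expMeasure_one (n : ℕ) :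
    Integrable (fun x => |x| ^ n) (expMeasure 1) := by
  rw [expMeasure_one_eq_withDensity, integrable_withDensity_iff_integrable_smul'
    (measurable_exponentialPDFReal 1).ennreal_ofReal (ae_of_all _ fun _ => ENNReal.ofReal_lt_top)]
  simp only [ENNReal.toReal_ofReal (exponentialPDFReal_nonneg one_pos _), smul_eq_mul,
    exponentialPDFReal_one_mul_abs_pow]
  exact (integrableOn_exp_neg_mul_pow n).integrable_indicator measurableSet_Ici

theorem integral_abs_pow_expMeasure_one (n : ℕ) :
    ∫ x, |x| ^ n ∂expMeasure 1 = n ! := by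
  rw [expMeasure_one_eq_withDensity, integral_withDensity_eq_integral_toReal_smul
    (measurable_exponentialPDFReal 1).ennreal_ofReal (ae_of_all _ fun _ => ENNReal.ofReal_lt_top)]
  simp only [ENNReal.toReal_ofReal (exponentialPDFReal_nonneg one_pos _), smul_eq_mul,
    exponentialPDFReal_one_mul_abs_pow]
  rw [integral_indicator measurableSet_Ici, integral_Ici_eq_integral_Ioi,
    ← Real.Gamma_nat_eq_factorial, Real.Gamma_eq_integral (by positivity)]
  refine setIntegral_congr_fun measurableSet_Ioi fun x _ => ?_
  norm_num [Real.rpow_natCast]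

theorem norm_sub_le_mul_sum_abs {E : Type*} [SeminormedAddCommGroup E] [NormedSpace ℝ E]
    {a : ℕ → ℝ} {z x : ℕ → E} {D : ℝ} (hz : ∀ i, ‖z i‖ ≤ D)
    (hx : ∀ t, 1 ≤ t → x t = x (t - 1) + a t • z t) {s t : ℕ} (hst : s ≤ t) :
    ‖x s - x t‖ ≤ D * ∑ i ∈ Ioc s t, |a i| := by
  induction t, hst using Nat.le_induction with
  | base => simp
  | succ t hst ih =>
    have hstep : x s - x (t + 1) = (x s - x t) - a (t + 1) • z (t + 1) := by
      rw [hx (t + 1) (by omega), Nat.add_sub_cancel]; abel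
    calc ‖x s - x (t + 1)‖ ≤ ‖x s - x t‖ + |a (t + 1)| * ‖z (t + 1)‖ := by
          rw [hstep, ← Real.norm_eq_abs, ← norm_smul]; exact norm_sub_le _ _
      _ ≤ D * ∑ i ∈ Ioc s t, |a i| + |a (t + 1)| * D := by gcongr; exact hz _
      _ = D * ∑ i ∈ Ioc s (t + 1), |a i| := by rw [sum_Ioc_succ_top hst]; ring

section

variable {Ω : Type*} [MeasurableSpace Ω] {μ : Measure Ω}

theorem aemeasurable_of_map_eq_expMeasure_one {X : Ω → ℝ} (hX : μ.map X = expMeasure 1) :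
    AEMeasurable X μ :=
  AEMeasurable.of_map_ne_zero <| hX ▸ (isProbabilityMeasure_expMeasure one_pos).ne_zero

theorem integrable_abs_pow_of_map_eq_expMeasure_one {X : Ω → ℝ}
    (hX : μ.map X = expMeasure 1) (n : ℕ) : Integrable (fun ω => |X ω| ^ n) μ := by
  have h := integrable_abs_pow_expMeasure_one n
  rw [← hX] at h
  exact h.comp_aemeasurable (aemeasurable_of_map_eq_expMeasure_one hX)

theorem integral_abs_pow_of_map_eq_expMeasure_one {X : Ω → ℝ}
    (hX : μ.map X = expMeasure 1) (n : ℕ) : ∫ ω, |X ω| ^ n ∂μ = n ! := by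
  rw [← integral_abs_pow_expMeasure_one n, ← hX, integral_map
    (aemeasurable_of_map_eq_expMeasure_one hX) (by fun_prop)]

variable {α : ℕ → Ω → ℝ}

theorem integrable_abs_mul_abs
    (hαdist : ∀ i, μ.map (α i) = expMeasure 1) (hαindep : iIndepFun α μ)
    (i j : ℕ) : Integrable (fun ω => |α i ω| * |α j ω|) μ := by
  obtain rfl | hij := eq_or_ne i j
  · simpa [sq] using integrable_abs_pow_of_map_eq_expMeasure_one (hαdist i) 2
  · have h₁ k : Integrable (fun ω => |α k ω|) μ := by
      simpa using integrable_abs_pow_of_map_eq_expMeasure_one (hαdist k) 1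
    exact ((hαindep.indepFun hij).comp measurable_abs measurable_abs).integrable_mul (h₁ i) (h₁ j)

theorem integral_abs_mul_abs
    (hαdist : ∀ i, μ.map (α i) = expMeasure 1) (hαindep : iIndepFun α μ)
    (i j : ℕ) :
    ∫ ω, |α i ω| * |α j ω| ∂μ = 1 + if i = j then 1 else 0 := by
  obtain rfl | hij := eq_or_ne i j
  · simpa [sq, one_add_one_eq_two] using integral_abs_pow_of_map_eq_expMeasure_one (hαdist i) 2
  · have h₁ k : ∫ ω, |α k ω| ∂μ = 1 := by
      simpa using integral_abs_pow_of_map_eq_expMeasure_one (hαdist k) 1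
    have h := ((hαindep.indepFun hij).comp measurable_abs
      measurable_abs).integral_mul_eq_mul_integral
      (aemeasurable_of_map_eq_expMeasure_one (hαdist i)).abs.aestronglyMeasurable
      (aemeasurable_of_map_eq_expMeasure_one (hαdist j)).abs.aestronglyMeasurable
    simp only [Pi.mul_apply, Function.comp_apply] at h
    simp [hij, h, h₁]

theorem integrable_sq_sum_abs
    (hαdist : ∀ i, μ.map (α i) = expMeasure 1) (hαindep : iIndepFun α μ)
    (I : Finset ℕ) :
    Integrable (fun ω => (∑ i ∈ I, |α i ω|) ^ 2) μ := by
  simp only [sq, sum_mul_sum]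
  exact integrable_finsetSum _ fun i _ => integrable_finsetSum _ fun j _ =>
    integrable_abs_mul_abs hαdist hαindep i j

theorem integral_sq_sum_abs
    (hαdist : ∀ i, μ.map (α i) = expMeasure 1) (hαindep : iIndepFun α μ)
    (I : Finset ℕ) :
    ∫ ω, (∑ i ∈ I, |α i ω|) ^ 2 ∂μ = (#I : ℝ) ^ 2 + #I := by
  simp only [sq, sum_mul_sum]
  rw [integral_finsetSum _ fun i _ => integrable_finsetSum _ fun j _ =>
    integrable_abs_mul_abs hαdist hαindep i j]
  simp only [integral_finsetSum _ fun j _ => integrable_abs_mul_abs hαdist hαindep _ j,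
    integral_abs_mul_abs hαdist hαindep]
  simp [sum_add_distrib]

theorem integral_emaVariance_le {d : ℕ} {z x : ℕ → Ω → EuclideanSpace ℝ (Fin d)} {β D : ℝ}
    (hαdist : ∀ i, μ.map (α i) = expMeasure 1) (hαindep : iIndepFun α μ)
    (hβ₀ : 0 ≤ β) (hβ₁ : β < 1) (hz : ∀ t ω, ‖z t ω‖ ≤ D)
    (hx : ∀ t, 1 ≤ t → ∀ ω, x t ω = x (t - 1) ω + α t ω • z t ω) {t : ℕ} (ht : t ≠ 0) :
    ∫ ω, emaVariance β (fun n => x n ω) t ∂μ ≤ 4 * D ^ 2 / (1 - β) ^ 2 := by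
  set w := emaWeight β t
  have hw₀ s : 0 ≤ w s := emaWeight_nonneg hβ₀ hβ₁.ne s
  have hpointwise ω : emaVariance β (fun n => x n ω) t ≤
      ∑ s ∈ Icc 1 t, w s * (D * ∑ i ∈ Ioc s t, |α i ω|) ^ 2 := by
    rw [emaVariance, emaIterate_eq_sum_emaWeight_smul]
    refine (sum_mul_norm_sub_sum_smul_sq_le _ (sum_emaWeight hβ₀ ht hβ₁.ne) _ (x t ω)).trans
      (sum_le_sum fun s hs => mul_le_mul_of_nonneg_left ?_ (hw₀ s))
    exact pow_le_pow_left₀ (norm_nonneg _)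
      (norm_sub_le_mul_sum_abs (hz · ω) (hx · · ω) (mem_Icc.1 hs).2) 2
  have hintegrable s : Integrable (fun ω => w s * (D * ∑ i ∈ Ioc s t, |α i ω|) ^ 2) μ := by
    simpa only [mul_pow, mul_assoc] using
      ((integrable_sq_sum_abs hαdist hαindep (Ioc s t)).const_mul (D ^ 2)).const_mul (w s)
  calc ∫ ω, emaVariance β (fun n => x n ω) t ∂μ
      ≤ ∫ ω, ∑ s ∈ Icc 1 t, w s * (D * ∑ i ∈ Ioc s t, |α i ω|) ^ 2 ∂μ :=
        integral_mono_of_nonneg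
          (ae_of_all _ fun ω => sum_nonneg fun s _ => mul_nonneg (hw₀ s) (sq_nonneg _))
          (integrable_finsetSum _ fun s _ => hintegrable s) (ae_of_all _ hpointwise)
    _ = D ^ 2 * ∑ s ∈ Icc 1 t, w s * (((t - s : ℕ) : ℝ) ^ 2 + (t - s : ℕ)) := by
        rw [integral_finsetSum _ fun s _ => hintegrable s, mul_sum]
        refine sum_congr rfl fun s _ => ?_
        simp only [mul_pow, integral_const_mul, integral_sq_sum_abs hαdist hαindep,
          Nat.card_Ioc]
        ring
    _ ≤ D ^ 2 * (4 / (1 - β) ^ 2) := by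
        gcongr; exact sum_emaWeight_mul_sq_add_le hβ₀ hβ₁ ht
    _ = 4 * D ^ 2 / (1 - β) ^ 2 := by ring

end

theorem ema_variance_bound_general {d : ℕ} {Ω : Type*} [MeasurableSpace Ω]
    (μ : Measure Ω)
    (β D : ℝ) (hβ : β ∈ Set.Ioo (0 : ℝ) 1)
    (T : ℕ)
    (α : ℕ → Ω → ℝ) (z x : ℕ → Ω → EuclideanSpace ℝ (Fin d))
    (hαdist : ∀ t, Measure.map (α t) μ = expMeasure 1)
    (hαindep : iIndepFun α μ)
    (hz : ∀ t ω, ‖z t ω‖ ≤ D)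
    (hx : ∀ t, 1 ≤ t → ∀ ω, x t ω = x (t - 1) ω + α t ω • z t ω) :
    (1 / (T : ℝ)) * ∑ t ∈ Finset.Icc 1 T, ∫ ω,
        ∑ s ∈ Finset.Icc 1 t, (β ^ (t - s) * (1 - β) / (1 - β ^ t)) *
          ‖x s ω - emaIterate β (fun n => x n ω) t‖ ^ 2 ∂μ
      ≤ 12 * D ^ 2 / (1 - β) ^ 2 := by
  obtain ⟨hβ₀, hβ₁⟩ := hβ
  have hterm : ∀ t ∈ Icc 1 T,
      ∫ ω, emaVariance β (fun n => x n ω) t ∂μ ≤ 4 * D ^ 2 / (1 - β) ^ 2 := fun t ht =>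
    integral_emaVariance_le hαdist hαindep hβ₀.le hβ₁ hz hx (by simp at ht; omega)
  calc (1 / (T : ℝ)) * ∑ t ∈ Icc 1 T, ∫ ω, emaVariance β (fun n => x n ω) t ∂μ
      ≤ (1 / (T : ℝ)) * (T * (4 * D ^ 2 / (1 - β) ^ 2)) := by
        gcongr
        simpa using sum_le_card_nsmul _ _ _ hterm
    _ = (T / T : ℝ) * (4 * D ^ 2 / (1 - β) ^ 2) := by ring
    _ ≤ 4 * D ^ 2 / (1 - β) ^ 2 := mul_le_of_le_one_left (by positivity) (div_self_le_one _)
    _ ≤ 12 * D ^ 2 / (1 - β) ^ 2 := by gcongr; norm_num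

/-- For iterates `x t = x (t−1) + α t • z t` with `α t` i.i.d. `Exp(1)`
(independent of the history) and `‖z t‖ ≤ D`, letting `y t` be the geometric-weighted random
iterate (`P(y t = x s) = β^{t−s}(1−β)/(1−β^t)`) and `x̄ t = E[y t]` the EMA, the averaged
variance satisfies `(1/T) Σ_{t=1}^T E‖y t − x̄ t‖² ≤ 12 D²/(1−β)²`. -/
theorem ema_variance_bound {d : ℕ} {Ω : Type*} [MeasurableSpace Ω]
    (μ : Measure Ω) [IsProbabilityMeasure μ]
    (β D : ℝ) (hβ : β ∈ Set.Ioo (0 : ℝ) 1) (hD : 0 < D)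
    (T : ℕ) (hT : 1 ≤ T)
    (α : ℕ → Ω → ℝ) (z x : ℕ → Ω → EuclideanSpace ℝ (Fin d))
    (hαmeas : ∀ t, Measurable (α t))
    (hαdist : ∀ t, Measure.map (α t) μ = expMeasure 1)
    (hαindep : iIndepFun α μ)
    (hαhist : ∀ t, 1 ≤ t →
      IndepFun (α t) (fun ω => (x (t - 1) ω, z t ω)) μ)
    (hz : ∀ t ω, ‖z t ω‖ ≤ D)
    (hx : ∀ t, 1 ≤ t → ∀ ω, x t ω = x (t - 1) ω + α t ω • z t ω)
    (hInt : ∀ t ∈ Finset.Icc 1 T, Integrable (fun ω =>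
      ∑ s ∈ Finset.Icc 1 t, (β ^ (t - s) * (1 - β) / (1 - β ^ t)) *
        ‖x s ω - emaIterate β (fun n => x n ω) t‖ ^ 2) μ) :
    (1 / (T : ℝ)) * ∑ t ∈ Finset.Icc 1 T, ∫ ω,
        ∑ s ∈ Finset.Icc 1 t, (β ^ (t - s) * (1 - β) / (1 - β ^ t)) *
          ‖x s ω - emaIterate β (fun n => x n ω) t‖ ^ 2 ∂μ
      ≤ 12 * D ^ 2 / (1 - β) ^ 2 :=
  ema_variance_bound_general μ β D hβ T α z x hαdist hαindep hz hx
end
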